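/- Let A ⊆ ℕ × ∂B be a finite set with s ≥ 1 for every (s,y) ∈ A, and let σ be a permutation of A, writing σ(s,y) = (σ₁(s,y), σ₂(s,y)). Then the following four conditions are equivalent: (i) ∏_{(s,y)∈A} P(Z^y_s = σ₂(s,y) + σ₁(s,y) e_d) > 0; (ii) ∏_{(s,y)∈A} P(Z^y_s = σ₂(s,y) − σ₁(s,y) e_d) > 0; (iii) σ(s,y) ∈ S(s,y) for all (s,y) ∈ A; (iv) σ is the identity permutation of A. -/

import Mathlib

open Finset

/-- The `i`-th standard unit vector `e_i` in `ℤ^(d+1)`. -/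
def unitVec (d : ℕ) (i : Fin (d + 1)) : Fin (d + 1) → ℤ := Pi.single i 1

/-- The ℓ¹-norm `‖v‖₁ = ∑ i, |v i|` on `ℤ^(d+1)`. -/
def norm1 {d : ℕ} (v : Fin (d + 1) → ℤ) : ℤ := ∑ i, |v i|

/-- `P t x z` represents the `t`-step transition probability `P(Z^x_t = z)` of a
time-homogeneous Markov chain on `ℤ^(d+1)` which at each step moves by `± e_i`,
with all `2(d+1)` one-step probabilities strictly positive and summing to `1`. -/
structure IsRandomWalk (d : ℕ)
    (P : ℕ → (Fin (d + 1) → ℤ) → (Fin (d + 1) → ℤ) → ℝ) : Prop where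
  nonneg : ∀ t x z, 0 ≤ P t x z
  init : ∀ x z, P 0 x z = if z = x then 1 else 0
  step : ∀ t x z, P (t + 1) x z =
      ∑ i, P 1 x (x + unitVec d i) * P t (x + unitVec d i) z
        + ∑ i, P 1 x (x - unitVec d i) * P t (x - unitVec d i) z
  sum_one : ∀ x, (∑ i, P 1 x (x + unitVec d i)) + (∑ i, P 1 x (x - unitVec d i)) = 1
  pos_add : ∀ x i, 0 < P 1 x (x + unitVec d i)
  pos_sub : ∀ x i, 0 < P 1 x (x - unitVec d i)

/-- The expectation `E[h(Z^x_t)]` (the law of `Z^x_t` has finite support). -/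
noncomputable def expect {d : ℕ} (P : ℕ → (Fin (d + 1) → ℤ) → (Fin (d + 1) → ℤ) → ℝ)
    (t : ℕ) (x : Fin (d + 1) → ℤ) (h : (Fin (d + 1) → ℤ) → ℝ) : ℝ :=
  ∑ᶠ z, h z * P t x z

/-- The finite set `S(t,x) = {(s,y) ∈ ℕ × ∂B : 1 ≤ s ≤ t, ‖y − x‖₁ ≤ t − s,
and t − s − ‖y − x‖₁ is even}`. -/
noncomputable def Sset (d t : ℕ) (x : Fin (d + 1) → ℤ) : Finset (ℕ × (Fin (d + 1) → ℤ)) :=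
  ((Finset.Icc 1 t) ×ˢ (Fintype.piFinset fun i => Finset.Icc (x i - t) (x i + t))).filter
    (fun p => p.2 (Fin.last d) = 0 ∧ norm1 (p.2 - x) ≤ (t : ℤ) - p.1 ∧
      Even ((t : ℤ) - p.1 - norm1 (p.2 - x)))

/-- The matrix `W^+_{t,x}`, with entries `(W^+)_{(s,y),(u,z)} = P(Z^y_s = z + u e_d)`. -/
noncomputable def Wplus {d : ℕ} (P : ℕ → (Fin (d + 1) → ℤ) → (Fin (d + 1) → ℤ) → ℝ)
    (t : ℕ) (x : Fin (d + 1) → ℤ) :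
    Matrix {p // p ∈ Sset d t x} {p // p ∈ Sset d t x} ℝ :=
  fun p q => P p.1.1 p.1.2 (q.1.2 + Pi.single (Fin.last d) (q.1.1 : ℤ))

/-- The matrix `W^-_{t,x}`, with entries `(W^-)_{(s,y),(u,z)} = P(Z^y_s = z - u e_d)`. -/
noncomputable def Wminus {d : ℕ} (P : ℕ → (Fin (d + 1) → ℤ) → (Fin (d + 1) → ℤ) → ℝ)
    (t : ℕ) (x : Fin (d + 1) → ℤ) :
    Matrix {p // p ∈ Sset d t x} {p // p ∈ Sset d t x} ℝ :=
  fun p q => P p.1.1 p.1.2 (q.1.2 - Pi.single (Fin.last d) (q.1.1 : ℤ))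

/-- `N_{t,x} = (W^-_{t,x})⁻¹ W^+_{t,x}`. -/
noncomputable def Nmat {d : ℕ} (P : ℕ → (Fin (d + 1) → ℤ) → (Fin (d + 1) → ℤ) → ℝ)
    (t : ℕ) (x : Fin (d + 1) → ℤ) :
    Matrix {p // p ∈ Sset d t x} {p // p ∈ Sset d t x} ℝ :=
  (Wminus P t x)⁻¹ * Wplus P t x

/-- The extended transform `N f`, vanishing outside `{w : w_d < 0}`, defined at a point
`w = x − t e_d` (with `x ∈ ∂B`, `t ≥ 1`) as the `(t,x)`-component of `N_{t,x}` applied to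
the vector `(f(z + u e_d))_{(u,z) ∈ S(t,x)}`.  (Note that `(t,x) ∈ S(t,x)` always holds
in this situation, so the guard below is satisfied exactly when `w_d < 0`.) -/
noncomputable def Ntrans {d : ℕ} (P : ℕ → (Fin (d + 1) → ℤ) → (Fin (d + 1) → ℤ) → ℝ)
    (f : (Fin (d + 1) → ℤ) → ℝ) : (Fin (d + 1) → ℤ) → ℝ := fun w =>
  if hm : ((-(w (Fin.last d))).toNat, Function.update w (Fin.last d) 0) ∈
      Sset d (-(w (Fin.last d))).toNat (Function.update w (Fin.last d) 0) then
    (Nmat P (-(w (Fin.last d))).toNat (Function.update w (Fin.last d) 0)).mulVec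
      (fun p => f (p.1.2 + Pi.single (Fin.last d) (p.1.1 : ℤ)))
      ⟨((-(w (Fin.last d))).toNat, Function.update w (Fin.last d) 0), hm⟩
  else 0

/-!
A nearest-neighbour walk in which every step `± e_i` has positive probability reaches `z` from `x`
in exactly `t` steps with positive probability iff `‖z - x‖₁ ≤ t` and `t - ‖z - x‖₁` is even.
For `y, z ∈ ∂B` the point `z ± u e_d` lies at ℓ¹-distance `‖z - y‖₁ + u` from `y`, so a factor of
the product in (i) or (ii) is positive iff `σ(s,y) ∈ S(s,y)`. Membership in `S(s,y)` forces
`σ₁(s,y) ≤ s`; as `σ` permutes `A`, the total time is preserved, so `σ₁(s,y) = s` everywhere, and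
then `‖σ₂(s,y) - y‖₁ ≤ 0` gives `σ₂(s,y) = y`.
-/

lemma prod_pos_iff_of_nonneg {ι R : Type*} [Fintype ι] [CommRing R] [LinearOrder R]
    [IsStrictOrderedRing R] {f : ι → R} (hf : ∀ i, 0 ≤ f i) :
    0 < ∏ i, f i ↔ ∀ i, 0 < f i := by
  rw [(prod_nonneg fun i _ ↦ hf i).lt_iff_ne', prod_ne_zero_iff]
  exact ⟨fun h i ↦ (hf i).lt_of_ne' (h i (mem_univ i)), fun h i _ ↦ (h i).ne'⟩

lemma Equiv.Perm.map_eq_of_forall_map_le {α M : Type*} [Fintype α] [AddCommMonoid M]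
    [PartialOrder M] [IsOrderedCancelAddMonoid M] (σ : Equiv.Perm α) {f : α → M}
    (h : ∀ a, f (σ a) ≤ f a) (a : α) : f (σ a) = f a :=
  (sum_eq_sum_iff_of_le fun a _ ↦ h a).1 (Equiv.sum_comp σ f) a (mem_univ a)

section norm1

variable {d : ℕ}

lemma norm1_nonneg (v : Fin (d + 1) → ℤ) : 0 ≤ norm1 v :=
  sum_nonneg fun i _ ↦ abs_nonneg (v i)

lemma abs_le_norm1 (v : Fin (d + 1) → ℤ) (i : Fin (d + 1)) : |v i| ≤ norm1 v :=
  single_le_sum (fun j _ ↦ abs_nonneg (v j)) (mem_univ i)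

@[simp]
lemma norm1_eq_zero {v : Fin (d + 1) → ℤ} : norm1 v = 0 ↔ v = 0 := by
  simp [norm1, sum_eq_zero_iff_of_nonneg, funext_iff]

@[simp]
lemma norm1_zero : norm1 (0 : Fin (d + 1) → ℤ) = 0 :=
  norm1_eq_zero.2 rfl

lemma norm1_add_single (v : Fin (d + 1) → ℤ) (i : Fin (d + 1)) (c : ℤ) :
    norm1 (v + Pi.single i c) = norm1 v - |v i| + |v i + c| := by
  have hterm (j : Fin (d + 1)) :
      |(v + Pi.single i c : Fin (d + 1) → ℤ) j| =
        |v j| + (Pi.single i (|v i + c| - |v i|) : Fin (d + 1) → ℤ) j := by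
    rcases eq_or_ne j i with rfl | hj
    · simp
    · simp [hj]
  simp only [norm1, hterm, sum_add_distrib, sum_pi_single', mem_univ, if_true]
  ring

lemma norm1_add_single_last {x z : Fin (d + 1) → ℤ} (hx : x (Fin.last d) = 0)
    (hz : z (Fin.last d) = 0) (c : ℤ) :
    norm1 (z + Pi.single (Fin.last d) c - x) = norm1 (z - x) + |c| := by
  rw [add_sub_right_comm, norm1_add_single]
  simp [hx, hz]

end norm1

/-- `v` is a sum of exactly `t` vectors of the form `± e_i`. -/
def ReachableIn {d : ℕ} (t : ℕ) (v : Fin (d + 1) → ℤ) : Prop :=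
  norm1 v ≤ t ∧ Even ((t : ℤ) - norm1 v)

lemma reachableIn_zero_iff {d : ℕ} {v : Fin (d + 1) → ℤ} : ReachableIn 0 v ↔ v = 0 := by
  have := norm1_nonneg v
  rw [ReachableIn, ← norm1_eq_zero]
  constructor
  · rintro ⟨h, -⟩
    push_cast at h
    omega
  · intro h
    simp [h]

lemma reachableIn_succ_iff {d : ℕ} {t : ℕ} {v : Fin (d + 1) → ℤ} :
    ReachableIn (t + 1) v ↔
      ∃ i, ReachableIn t (v - Pi.single i 1) ∨ ReachableIn t (v + Pi.single i 1) := by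
  simp only [ReachableIn, sub_eq_add_neg, ← Pi.single_neg, norm1_add_single, Int.even_iff,
    Int.abs_eq_natAbs]
  constructor
  · rintro ⟨hle, hpar⟩
    by_cases hv : v = 0
    · subst hv
      refine ⟨0, Or.inr ?_⟩
      simp only [norm1_zero, Pi.zero_apply] at hle hpar ⊢
      omega
    · obtain ⟨i, hi⟩ : ∃ i, v i ≠ 0 := by simpa [funext_iff] using hv
      have := abs_le_norm1 v i
      rw [Int.abs_eq_natAbs] at this
      refine ⟨i, ?_⟩
      push_cast at hle hpar
      omega
  · rintro ⟨i, h | h⟩ <;>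
    · have := abs_le_norm1 v i
      rw [Int.abs_eq_natAbs] at this
      push_cast
      omega

namespace IsRandomWalk

variable {d : ℕ} {P : ℕ → (Fin (d + 1) → ℤ) → (Fin (d + 1) → ℤ) → ℝ}

lemma pos_succ_iff (hP : IsRandomWalk d P) (t : ℕ) (x z : Fin (d + 1) → ℤ) :
    0 < P (t + 1) x z ↔ ∃ i, 0 < P t (x + unitVec d i) z ∨ 0 < P t (x - unitVec d i) z := by
  have hsum {f : Fin (d + 1) → (Fin (d + 1) → ℤ)} (hf : ∀ i, 0 < P 1 x (f i)) :
      0 < ∑ i, P 1 x (f i) * P t (f i) z ↔ ∃ i, 0 < P t (f i) z := by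
    rw [sum_pos_iff_of_nonneg fun i _ ↦ mul_nonneg (hP.nonneg _ _ _) (hP.nonneg _ _ _)]
    simp [mul_pos_iff_of_pos_left (hf _)]
  have hplus := hsum (hP.pos_add x)
  have hminus := hsum (hP.pos_sub x)
  have h₁ : 0 ≤ ∑ i, P 1 x (x + unitVec d i) * P t (x + unitVec d i) z :=
    sum_nonneg fun i _ ↦ mul_nonneg (hP.nonneg _ _ _) (hP.nonneg _ _ _)
  have h₂ : 0 ≤ ∑ i, P 1 x (x - unitVec d i) * P t (x - unitVec d i) z :=
    sum_nonneg fun i _ ↦ mul_nonneg (hP.nonneg _ _ _) (hP.nonneg _ _ _)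
  rw [hP.step, exists_or, ← hminus, ← hplus]
  constructor
  · intro h
    by_contra! h'
    linarith
  · rintro (h | h) <;> linarith

lemma pos_iff (hP : IsRandomWalk d P) (t : ℕ) (x z : Fin (d + 1) → ℤ) :
    0 < P t x z ↔ ReachableIn t (z - x) := by
  induction t generalizing x with
  | zero =>
    rw [hP.init, reachableIn_zero_iff, sub_eq_zero]
    split_ifs <;> simp [*]
  | succ t ih =>
    rw [hP.pos_succ_iff, reachableIn_succ_iff]
    refine exists_congr fun i ↦ or_congr ?_ ?_
    · rw [ih, unitVec, sub_add_eq_sub_sub]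
    · rw [ih, unitVec, sub_sub_eq_add_sub, add_sub_right_comm]

end IsRandomWalk

section Sset

variable {d t : ℕ} {x : Fin (d + 1) → ℤ} {p : ℕ × (Fin (d + 1) → ℤ)}

lemma mem_Sset_iff : p ∈ Sset d t x ↔ 1 ≤ p.1 ∧ p.2 (Fin.last d) = 0 ∧
    norm1 (p.2 - x) ≤ (t : ℤ) - p.1 ∧ Even ((t : ℤ) - p.1 - norm1 (p.2 - x)) := by
  simp only [Sset, mem_filter, mem_product, Fintype.mem_piFinset, mem_Icc]
  refine ⟨fun ⟨⟨⟨hp, _⟩, _⟩, h⟩ ↦ ⟨hp, h⟩, fun ⟨hp, hlast, hle, hpar⟩ ↦ ?_⟩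
  have := norm1_nonneg (p.2 - x)
  refine ⟨⟨⟨hp, by omega⟩, fun i ↦ ?_⟩, hlast, hle, hpar⟩
  have := abs_le.1 ((abs_le_norm1 (p.2 - x) i).trans (by omega : norm1 (p.2 - x) ≤ t))
  simp only [Pi.sub_apply] at this
  omega

lemma self_mem_Sset (ht : 1 ≤ t) (hx : x (Fin.last d) = 0) : (t, x) ∈ Sset d t x :=
  mem_Sset_iff.2 ⟨ht, hx, by simp⟩

lemma fst_le_of_mem_Sset (hp : p ∈ Sset d t x) : p.1 ≤ t := by
  have := (mem_Sset_iff.1 hp).2.2.1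
  have := norm1_nonneg (p.2 - x)
  omega

lemma snd_eq_of_mem_Sset (hp : p ∈ Sset d t x) (ht : p.1 = t) : p.2 = x := by
  have := (mem_Sset_iff.1 hp).2.2.1
  have := norm1_nonneg (p.2 - x)
  rw [← sub_eq_zero, ← norm1_eq_zero]
  omega

end Sset

lemma IsRandomWalk.pos_add_single_last_iff {d : ℕ}
    {P : ℕ → (Fin (d + 1) → ℤ) → (Fin (d + 1) → ℤ) → ℝ} (hP : IsRandomWalk d P) (t : ℕ)
    {x z : Fin (d + 1) → ℤ} (hx : x (Fin.last d) = 0) (hz : z (Fin.last d) = 0) {c : ℤ}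
    (hc : c ≠ 0) :
    0 < P t x (z + Pi.single (Fin.last d) c) ↔ (c.natAbs, z) ∈ Sset d t x := by
  rw [hP.pos_iff, ReachableIn, norm1_add_single_last hx hz, mem_Sset_iff, Int.abs_eq_natAbs]
  simp only [hz, true_and, Int.even_iff]
  omega

lemma perm_eq_one_iff_forall_mem_Sset {d : ℕ} {A : Finset (ℕ × (Fin (d + 1) → ℤ))}
    (hA : ∀ p ∈ A, 1 ≤ p.1 ∧ p.2 (Fin.last d) = 0) (σ : Equiv.Perm {p // p ∈ A}) :
    (∀ p : {p // p ∈ A}, (σ p).1 ∈ Sset d p.1.1 p.1.2) ↔ σ = 1 := by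
  refine ⟨fun h ↦ ?_, ?_⟩
  · have htime := σ.map_eq_of_forall_map_le (f := fun p ↦ p.1.1) fun p ↦ fst_le_of_mem_Sset (h p)
    exact Equiv.ext fun p ↦ Subtype.ext (Prod.ext (htime p) (snd_eq_of_mem_Sset (h p) (htime p)))
  · rintro rfl p
    exact self_mem_Sset (hA p.1 p.2).1 (hA p.1 p.2).2

/-- the four conditions (i) `∏ P(Z^y_s = σ₂(s,y) + σ₁(s,y) e_d) > 0`,
(ii) `∏ P(Z^y_s = σ₂(s,y) − σ₁(s,y) e_d) > 0`, (iii) `σ(s,y) ∈ S(s,y)` for all `(s,y) ∈ A`,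
(iv) `σ = id`, are equivalent. -/
theorem stmt_5 (d : ℕ) (P : ℕ → (Fin (d + 1) → ℤ) → (Fin (d + 1) → ℤ) → ℝ)
    (hP : IsRandomWalk d P) (A : Finset (ℕ × (Fin (d + 1) → ℤ)))
    (hA : ∀ p ∈ A, 1 ≤ p.1 ∧ p.2 (Fin.last d) = 0)
    (σ : Equiv.Perm {p // p ∈ A}) :
    ((0 < ∏ p : {p // p ∈ A},
        P p.1.1 p.1.2 ((σ p).1.2 + Pi.single (Fin.last d) (((σ p).1.1 : ℤ)))) ↔ σ = 1) ∧
    ((0 < ∏ p : {p // p ∈ A},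
        P p.1.1 p.1.2 ((σ p).1.2 - Pi.single (Fin.last d) (((σ p).1.1 : ℤ)))) ↔ σ = 1) ∧
    ((∀ p : {p // p ∈ A}, (σ p).1 ∈ Sset d p.1.1 p.1.2) ↔ σ = 1) := by
  have hpos (p : {p // p ∈ A}) {c : ℤ} (hc : c.natAbs = (σ p).1.1) :
      0 < P p.1.1 p.1.2 ((σ p).1.2 + Pi.single (Fin.last d) c) ↔
        (σ p).1 ∈ Sset d p.1.1 p.1.2 := by
    have hσp := hA _ (σ p).2
    rw [hP.pos_add_single_last_iff _ (hA _ p.2).2 hσp.2 (by omega), hc]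
  rw [prod_pos_iff_of_nonneg fun _ ↦ hP.nonneg _ _ _,
    prod_pos_iff_of_nonneg fun _ ↦ hP.nonneg _ _ _, ← perm_eq_one_iff_forall_mem_Sset hA σ]
  refine ⟨forall_congr' fun p ↦ hpos p (Int.natAbs_natCast _), forall_congr' fun p ↦ ?_, Iff.rfl⟩
  rw [sub_eq_add_neg, ← Pi.single_neg]
  exact hpos p (by simp)
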